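/- arXiv:2201.01371 — 7 statements merged into one kernel-verified Lean document; each statement's English description precedes it below -/
import Mathlib

section
/- Let A and B be complex Banach algebras, ψ : A → B a continuous algebra homomorphism, and φ a character of B. If the linear span of the set 𝔓 of idempotent elements of A is dense in A with respect to the norm of A, then the only (φ,ψ)-point derivation on A is the zero functional, i.e. 𝔇_{(φ,ψ)} = {0}. -/
open WeakDual

/-- Let `A` and `B` be complex Banach algebras, `ψ : A → B` a continuous
algebra homomorphism and `φ` a character of `B`.  If the linear span of the set of idempotent
elements of `A` is dense in `A`, then the only `(φ,ψ)`-point derivation on `A` is zero: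
`𝔇_{(φ,ψ)} = {0}`. -/
theorem pointDerivations_eq_zero_of_denseSpan_idempotents
    {A B : Type*} [NormedRing A] [NormedAlgebra ℂ A] [CompleteSpace A]
    [NormedRing B] [NormedAlgebra ℂ B] [CompleteSpace B]
    (ψ : A →L[ℂ] B) (hψ : ∀ a b : A, ψ (a * b) = ψ a * ψ b)
    (φ : characterSpace ℂ B)
    (hdense : Dense ((Submodule.span ℂ {p : A | p * p = p} : Submodule ℂ A) : Set A)) :
    {D : A →L[ℂ] ℂ | ∀ a b : A, D (a * b) = φ (ψ a) * D b + φ (ψ b) * D a} = {0} := by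
  ext D
  simp only [Set.mem_setOf_eq, Set.mem_singleton_iff]
  constructor
  · intro hD
    -- D vanishes on every idempotent
    have hidem : ∀ p : A, p * p = p → D p = 0 := by
      intro p hp
      have hc : φ (ψ p) * φ (ψ p) = φ (ψ p) := by
        rw [← map_mul, ← hψ, hp]
      have hDp : D p = φ (ψ p) * D p + φ (ψ p) * D p := by
        conv_lhs => rw [← hp, hD p p]
      have hc' : φ (ψ p) * (φ (ψ p) - 1) = 0 := by ring_nf; linear_combination hc
      rcases mul_eq_zero.mp hc' with h | h
      · rw [h] at hDp; simpa using hDp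
      · have h1 : φ (ψ p) = 1 := by linear_combination h
        rw [h1] at hDp
        linear_combination -hDp
    -- hence on the span
    have hspan : ∀ x ∈ (Submodule.span ℂ {p : A | p * p = p} : Submodule ℂ A),
        D x = 0 := by
      intro x hx
      induction hx using Submodule.span_induction with
      | mem p hp => exact hidem p hp
      | zero => simp
      | add a b _ _ ha hb => simp [ha, hb]
      | smul c a _ ha => simp [ha]
    -- conclude by density and continuity
    have : (D : A → ℂ) = (0 : A →L[ℂ] ℂ) := by
      apply Continuous.ext_on hdense D.continuous (map_continuous _)
      intro x hx
      simpa using hspan x hx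
    exact ContinuousLinearMap.ext fun x => congrFun this x
  · intro h
    subst h
    intro a b
    simp
end

section
/- Let A and B be complex Banach algebras of complex-valued functions on a set X (with pointwise operations) such that A contains all constant functions on X, let ψ : A → B be a continuous algebra homomorphism and φ a character of B. If f ∈ A satisfies a polynomial identity P(f) = 0 (as a function on X), where P is a nonzero polynomial in one variable, then D(f) = 0 for every (φ,ψ)-point derivation D on A. -/
open WeakDual Polynomial

/-- Let `A` and `B` be complex Banach algebras of complex-valued functions on
a set `X` (realized via injective algebra homomorphisms into `X → ℂ`) such that `A` contains
all constant functions, `ψ : A → B` a continuous algebra homomorphism and `φ` a character of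
`B`.  If `f ∈ A` satisfies a polynomial identity `P(f) = 0` (as a function on `X`) for some
nonzero polynomial `P`, then `D f = 0` for every `(φ,ψ)`-point derivation `D` on `A`. -/
theorem pointDerivation_of_polynomial_identity
    {X : Type*} {A B : Type*} [NormedRing A] [NormedAlgebra ℂ A] [CompleteSpace A]
    [NormedRing B] [NormedAlgebra ℂ B] [CompleteSpace B]
    (jA : A →ₐ[ℂ] (X → ℂ)) (hjA : Function.Injective jA)
    (jB : B →ₐ[ℂ] (X → ℂ)) (hjB : Function.Injective jB)
    (hconst : ∀ c : ℂ, (fun _ : X => c) ∈ Set.range jA)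
    (ψ : A →L[ℂ] B) (hψ : ∀ a b : A, ψ (a * b) = ψ a * ψ b)
    (φ : characterSpace ℂ B)
    (f : A) (P : Polynomial ℂ) (hP : P ≠ 0) (hPf : ∀ x : X, P.eval (jA f x) = 0)
    (D : A →L[ℂ] ℂ)
    (hD : ∀ a b : A, D (a * b) = φ (ψ a) * D b + φ (ψ b) * D a) :
    D f = 0 := by
  classical
  have χmul : ∀ a b : A, φ (ψ (a * b)) = φ (ψ a) * φ (ψ b) := fun a b => by
    rw [hψ, map_mul]
  have hidem : φ (ψ 1) * φ (ψ 1) = φ (ψ 1) := by rw [← χmul, one_mul]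
  have hcases : φ (ψ 1) = 0 ∨ φ (ψ 1) = 1 := by
    rcases mul_eq_zero.1 (show φ (ψ 1) * (φ (ψ 1) - 1) = 0 by
      linear_combination hidem) with h | h
    · exact Or.inl h
    · exact Or.inr (sub_eq_zero.1 h)
  rcases hcases with hc | hc
  · -- degenerate case: `φ ∘ ψ ≡ 0`, and `D f = D (1 * f) = 0`.
    have χ0 : ∀ a : A, φ (ψ a) = 0 := fun a => by
      have := χmul a 1
      rw [mul_one, hc, mul_zero] at this
      exact this
    have := hD 1 f
    rw [one_mul, χ0, χ0, zero_mul, zero_mul, add_zero] at this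
    exact this
  · -- main case: `χ := φ ∘ ψ` is a character of `A`.
    set χ : A →ₐ[ℂ] ℂ :=
      { toFun := fun a => φ (ψ a)
        map_one' := hc
        map_mul' := χmul
        map_zero' := by show φ (ψ 0) = 0; rw [map_zero, map_zero]
        map_add' := fun a b => by show φ (ψ (a + b)) = _; rw [map_add, map_add]
        commutes' := fun c => by
          simp only [Algebra.algebraMap_eq_smul_one, map_smul, smul_eq_mul, hc, mul_one] } with hχ
    have hχapp : ∀ a : A, φ (ψ a) = χ a := fun a => rfl
    -- D 1 = 0
    have D1 : D 1 = 0 := by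
      have h := hD 1 1
      rw [one_mul, hc] at h
      linear_combination -h
    -- the squarefree polynomial annihilating f
    set T : Finset ℂ := P.roots.toFinset with hT
    set S : Polynomial ℂ := ∏ μ ∈ T, (Polynomial.X - Polynomial.C μ) with hS
    have hSf : aeval f S = 0 := by
      apply hjA
      rw [map_zero]
      funext x
      have h1 : jA (aeval f S) x = S.eval (jA f x) := by
        have h2 := aeval_algHom_apply ((Pi.evalAlgHom ℂ (fun _ : X => ℂ) x).comp jA) f S
        simpa [coe_aeval_eq_eval] using h2.symm
      rw [h1, Pi.zero_apply, hS, eval_prod]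
      refine Finset.prod_eq_zero (show jA f x ∈ T from ?_) (by simp)
      exact Multiset.mem_toFinset.2 (mem_roots'.2 ⟨hP, hPf x⟩)
    -- λ := χ f is a root of S
    set lam : ℂ := χ f with hlam
    have hSlam : S.eval lam = 0 := by
      have h2 := aeval_algHom_apply χ f S
      rw [hSf, map_zero, coe_aeval_eq_eval] at h2
      exact h2
    have hlamT : lam ∈ T := by
      rw [hS, eval_prod] at hSlam
      obtain ⟨μ, hμT, hμ⟩ := Finset.prod_eq_zero_iff.1 hSlam
      simp only [eval_sub, eval_X, eval_C, sub_eq_zero] at hμ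
      rwa [hμ]
    -- factor S = (Polynomial.X - Polynomial.C lam) * R with R(lam) ≠ 0
    set R : Polynomial ℂ := ∏ μ ∈ T.erase lam, (Polynomial.X - Polynomial.C μ) with hR
    have hSR : S = (Polynomial.X - Polynomial.C lam) * R := (Finset.mul_prod_erase T _ hlamT).symm
    have hRlam : R.eval lam ≠ 0 := by
      rw [hR, eval_prod]
      refine Finset.prod_ne_zero_iff.2 fun μ hμ => ?_
      simp only [eval_sub, eval_X, eval_C, sub_ne_zero]
      exact fun h => (Finset.mem_erase.1 hμ).1 (h ▸ rfl) |>.elim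
    -- the factored identity in A
    have hfact : (f - algebraMap ℂ A lam) * aeval f R = 0 := by
      have := hSf
      rw [hSR, map_mul, map_sub, aeval_X, aeval_C] at this
      exact this
    -- apply D
    have hDfact := hD (f - algebraMap ℂ A lam) (aeval f R)
    rw [hfact, map_zero, hχapp, hχapp, map_sub, AlgHom.commutes] at hDfact
    have hχR : χ (aeval f R) = R.eval lam := by
      have h2 := aeval_algHom_apply χ f R
      rw [coe_aeval_eq_eval] at h2
      exact h2.symm
    simp only [hχR, ← hlam, Algebra.algebraMap_self, RingHom.id_apply, sub_self, zero_mul,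
      zero_add] at hDfact
    have hDsub : D (f - algebraMap ℂ A lam) = D f := by
      rw [map_sub, Algebra.algebraMap_eq_smul_one, map_smul, smul_eq_mul, D1, mul_zero, sub_zero]
    rw [hDsub] at hDfact
    rcases mul_eq_zero.1 hDfact.symm with h | h
    · exact absurd h hRlam
    · exact h
end

section
/- Let A and B be complex Banach algebras of complex-valued functions on a set X (with pointwise operations) such that A contains all constant functions on X, let ψ : A → B be a continuous algebra homomorphism and φ a character of B. Let F denote the linear span of the set of all f ∈ A that satisfy P(f) = 0 for some nonzero polynomial P in one variable. If F is dense in A with respect to the norm of A, then 𝔇_{(φ,ψ)} = {0}. -/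
open WeakDual

/-! A function satisfying a nonzero polynomial identity takes only finitely many values, so
Lagrange interpolation on that finite set of values writes it as a linear combination of
idempotents (the indicator functions of its level sets), which stay in `A` because they are
polynomials in the function. A point derivation kills every idempotent `e`, since
`D e = 2 χ(e) D e` with `χ(e) ∈ {0, 1}`; by continuity it then vanishes on the closure of the
span, which is everything. -/

theorem apply_eq_zero_of_isIdempotentElem {A R : Type*} [Mul A] [CommRing R] (χ : A →ₙ* R)
    {D : A → R} (hD : ∀ a b : A, D (a * b) = χ a * D b + χ b * D a) {e : A}
    (he : IsIdempotentElem e) : D e = 0 := by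
  have hDe : D e = 2 * χ e * D e := by
    conv_lhs => rw [← he.eq]
    rw [hD]
    ring
  have hχe : χ e * χ e = χ e := by rw [← map_mul, he.eq]
  linear_combination (1 - 2 * χ e) * hDe - 4 * D e * hχe

theorem Lagrange.eval_basis_id_eq_ite {K : Type*} [Field K] [DecidableEq K] {T : Finset K}
    (s : K) {t : K} (ht : t ∈ T) : (Lagrange.basis T id s).eval t = if t = s then 1 else 0 := by
  split_ifs with hts
  · subst hts
    exact Lagrange.eval_basis_self (Set.injOn_id _) ht
  · exact Lagrange.eval_basis_of_ne (v := id) (Ne.symm hts) ht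

theorem AlgHom.apply_aeval_apply {K A X : Type*} [CommRing K] [Ring A] [Algebra K A]
    (j : A →ₐ[K] (X → K)) (f : A) (p : Polynomial K) (x : X) :
    j (Polynomial.aeval f p) x = p.eval (j f x) := by
  rw [← Polynomial.aeval_algHom_apply, Polynomial.aeval_pi_apply₂, Polynomial.coe_aeval_eq_eval]

theorem mem_span_setOf_isIdempotentElem_of_finite_range {K A X : Type*} [Field K] [Ring A]
    [Algebra K A] (j : A →ₐ[K] (X → K)) (hj : Function.Injective j) {f : A}
    (hf : (Set.range (j f)).Finite) : f ∈ Submodule.span K {e : A | IsIdempotentElem e} := by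
  classical
  set T := hf.toFinset
  have hT : ∀ x, j f x ∈ T := fun x => hf.mem_toFinset.mpr ⟨x, rfl⟩
  set e : K → A := fun s => Polynomial.aeval f (Lagrange.basis T id s)
  have hje : ∀ s x, j (e s) x = if j f x = s then 1 else 0 := fun s x => by
    rw [AlgHom.apply_aeval_apply, Lagrange.eval_basis_id_eq_ite s (hT x)]
  have he : ∀ s, IsIdempotentElem (e s) := fun s => hj <| by
    ext x
    rw [map_mul, Pi.mul_apply, hje]
    split_ifs <;> simp
  have hf_eq : f = ∑ s ∈ T, s • e s := hj <| by
    ext x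
    simp only [map_sum, map_smul, Finset.sum_apply, Pi.smul_apply, hje, smul_eq_mul, mul_ite,
      mul_one, mul_zero, Finset.sum_ite_eq, hT x, if_true]
  rw [hf_eq]
  exact Submodule.sum_mem _ fun s _ => Submodule.smul_mem _ s (Submodule.subset_span (he s))

theorem pointDerivations_eq_zero_of_denseSpan_polynomialIdentity_general
    {X : Type*} {A B : Type*} [NormedRing A] [NormedAlgebra ℂ A]
    [NormedRing B] [NormedAlgebra ℂ B]
    (jA : A →ₐ[ℂ] (X → ℂ)) (hjA : Function.Injective jA)
    (ψ : A →L[ℂ] B) (hψ : ∀ a b : A, ψ (a * b) = ψ a * ψ b)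
    (φ : characterSpace ℂ B)
    (hdense : Dense ((Submodule.span ℂ
        {f : A | ∃ P : Polynomial ℂ, P ≠ 0 ∧ ∀ x : X, P.eval (jA f x) = 0} :
          Submodule ℂ A) : Set A)) :
    {D : A →L[ℂ] ℂ | ∀ a b : A, D (a * b) = φ (ψ a) * D b + φ (ψ b) * D a} = {0} := by
  ext D
  refine ⟨fun hD => ?_, fun hD => by simp [Set.mem_singleton_iff.mp hD]⟩
  let χ : A →ₙ* ℂ := ⟨fun a => φ (ψ a), fun a b => by simp only [hψ, map_mul]⟩
  have hidem : Submodule.span ℂ {e : A | IsIdempotentElem e} ≤ LinearMap.ker (D : A →ₗ[ℂ] ℂ) :=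
    Submodule.span_le.mpr fun e he => apply_eq_zero_of_isIdempotentElem χ hD he
  refine ContinuousLinearMap.ext_on hdense ?_
  rintro f ⟨P, hP, hroot⟩
  have hfin : (Set.range (jA f)).Finite :=
    (P.finite_setOfPred_isRoot hP).subset (Set.range_subset_iff.mpr hroot)
  exact hidem (mem_span_setOf_isIdempotentElem_of_finite_range jA hjA hfin)

/-- Let `A` and `B` be complex Banach algebras of complex-valued functions on
a set `X` (realized via injective algebra homomorphisms into `X → ℂ`) such that `A` contains
all constant functions, `ψ : A → B` a continuous algebra homomorphism and `φ` a character of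
`B`.  If the linear span `F` of the set of all `f ∈ A` satisfying a polynomial identity
`P(f) = 0` (as a function on `X`, for some nonzero one-variable polynomial `P`) is dense in
`A`, then `𝔇_{(φ,ψ)} = {0}`. -/
theorem pointDerivations_eq_zero_of_denseSpan_polynomialIdentity
    {X : Type*} {A B : Type*} [NormedRing A] [NormedAlgebra ℂ A] [CompleteSpace A]
    [NormedRing B] [NormedAlgebra ℂ B] [CompleteSpace B]
    (jA : A →ₐ[ℂ] (X → ℂ)) (hjA : Function.Injective jA)
    (jB : B →ₐ[ℂ] (X → ℂ)) (hjB : Function.Injective jB)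
    (hconst : ∀ c : ℂ, (fun _ : X => c) ∈ Set.range jA)
    (ψ : A →L[ℂ] B) (hψ : ∀ a b : A, ψ (a * b) = ψ a * ψ b)
    (φ : characterSpace ℂ B)
    (hdense : Dense ((Submodule.span ℂ
        {f : A | ∃ P : Polynomial ℂ, P ≠ 0 ∧ ∀ x : X, P.eval (jA f x) = 0} :
          Submodule ℂ A) : Set A)) :
    {D : A →L[ℂ] ℂ | ∀ a b : A, D (a * b) = φ (ψ a) * D b + φ (ψ b) * D a} = {0} :=
  pointDerivations_eq_zero_of_denseSpan_polynomialIdentity_general jA hjA ψ hψ φ hdense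
end

section
/- Let A be a complex Banach algebra and B a commutative semisimple complex Banach algebra. Let ψ₁, ψ₂ : A → B be continuous algebra homomorphisms and let D be a nonzero bounded linear functional on A such that, for every character φ of B, D is both a (φ,ψ₁)-point derivation and a (φ,ψ₂)-point derivation. Then ψ₁ = ψ₂. -/
open WeakDual

/-- Let `A` be a complex Banach algebra and `B` a commutative semisimple
complex Banach algebra (the characters of `B` separate its points).  If `ψ₁, ψ₂ : A → B` are
continuous algebra homomorphisms and `D` is a nonzero bounded linear functional on `A` which
is simultaneously a `(φ,ψ₁)`- and a `(φ,ψ₂)`-point derivation for every character `φ` of `B`,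
then `ψ₁ = ψ₂`. -/
theorem pointDerivation_unique_hom
    {A B : Type*} [NormedRing A] [NormedAlgebra ℂ A] [CompleteSpace A]
    [NormedCommRing B] [NormedAlgebra ℂ B] [CompleteSpace B]
    (hsemi : ∀ b : B, (∀ φ : characterSpace ℂ B, φ b = 0) → b = 0)
    (ψ₁ ψ₂ : A →L[ℂ] B)
    (hψ₁ : ∀ a b : A, ψ₁ (a * b) = ψ₁ a * ψ₁ b)
    (hψ₂ : ∀ a b : A, ψ₂ (a * b) = ψ₂ a * ψ₂ b)
    (D : A →L[ℂ] ℂ) (hD0 : D ≠ 0)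
    (hD₁ : ∀ φ : characterSpace ℂ B, ∀ a b : A,
      D (a * b) = φ (ψ₁ a) * D b + φ (ψ₁ b) * D a)
    (hD₂ : ∀ φ : characterSpace ℂ B, ∀ a b : A,
      D (a * b) = φ (ψ₂ a) * D b + φ (ψ₂ b) * D a) :
    ψ₁ = ψ₂ := by
  obtain ⟨b₀, hb₀⟩ : ∃ a : A, D a ≠ 0 := by
    by_contra h
    push_neg at h
    exact hD0 (ContinuousLinearMap.ext fun a => by simp [h a])
  ext a
  have key : ∀ φ : characterSpace ℂ B, φ (ψ₁ a) = φ (ψ₂ a) := by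
    intro φ
    have hb : φ (ψ₁ b₀) = φ (ψ₂ b₀) := by
      have h1 := hD₁ φ b₀ b₀
      have h2 := hD₂ φ b₀ b₀
      have : φ (ψ₁ b₀) * D b₀ = φ (ψ₂ b₀) * D b₀ := by
        have := h1.symm.trans h2
        ring_nf at this ⊢
        linear_combination this / 2
      exact mul_right_cancel₀ hb₀ this
    have h1 := hD₁ φ a b₀
    have h2 := hD₂ φ a b₀
    have : φ (ψ₁ a) * D b₀ = φ (ψ₂ a) * D b₀ := by
      rw [hb] at h1
      linear_combination h1.symm.trans h2
    exact mul_right_cancel₀ hb₀ this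
  have : ψ₁ a - ψ₂ a = 0 := hsemi _ fun φ => by
    simp [map_sub, key φ]
  exact sub_eq_zero.mp this
end

section
/- Let A be a complex Banach algebra, ψ : A → A a continuous algebra homomorphism, and φ₁, φ₂ characters of A. If D is a nonzero bounded linear functional on A that is simultaneously a (φ₁,ψ)-point derivation and a (φ₂,ψ)-point derivation, then φ₁∘ψ = φ₂∘ψ; in particular, if ψ is the identity map of A, then φ₁ = φ₂. -/
open WeakDual

/-- Let `A` be a complex Banach algebra, `ψ : A → A` a continuous algebra
homomorphism, and `φ₁, φ₂` characters of `A`.  If `D` is a nonzero bounded linear functional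
on `A` that is simultaneously a `(φ₁,ψ)`-point derivation and a `(φ₂,ψ)`-point derivation,
then `φ₁ ∘ ψ = φ₂ ∘ ψ`; in particular, if `ψ` is the identity map of `A`, then `φ₁ = φ₂`. -/
theorem pointDerivation_unique_character
    {A : Type*} [NormedRing A] [NormedAlgebra ℂ A] [CompleteSpace A]
    (ψ : A →L[ℂ] A) (hψ : ∀ a b : A, ψ (a * b) = ψ a * ψ b)
    (φ₁ φ₂ : characterSpace ℂ A)
    (D : A →L[ℂ] ℂ) (hD0 : D ≠ 0)
    (hD₁ : ∀ a b : A, D (a * b) = φ₁ (ψ a) * D b + φ₁ (ψ b) * D a)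
    (hD₂ : ∀ a b : A, D (a * b) = φ₂ (ψ a) * D b + φ₂ (ψ b) * D a) :
    (∀ a : A, φ₁ (ψ a) = φ₂ (ψ a)) ∧ (ψ = ContinuousLinearMap.id ℂ A → φ₁ = φ₂) := by
  obtain ⟨b, hb⟩ : ∃ b : A, D b ≠ 0 := by
    by_contra h
    push_neg at h
    exact hD0 (by ext a; simpa using h a)
  have key : ∀ a c : A,
      (φ₁ (ψ a) - φ₂ (ψ a)) * D c + (φ₁ (ψ c) - φ₂ (ψ c)) * D a = 0 := by
    intro a c
    have := (hD₁ a c).symm.trans (hD₂ a c)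
    ring_nf
    ring_nf at this
    linear_combination this
  have hbb : φ₁ (ψ b) = φ₂ (ψ b) := by
    have := key b b
    have h2 : (φ₁ (ψ b) - φ₂ (ψ b)) * D b = 0 := by linear_combination this / 2
    rcases mul_eq_zero.mp h2 with h | h
    · exact sub_eq_zero.mp h
    · exact absurd h hb
  have main : ∀ a : A, φ₁ (ψ a) = φ₂ (ψ a) := by
    intro a
    have := key a b
    rw [hbb, sub_self, zero_mul, add_zero] at this
    rcases mul_eq_zero.mp this with h | h
    · exact sub_eq_zero.mp h
    · exact absurd h hb
  refine ⟨main, fun hid => ?_⟩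
  ext a
  have := main a
  rw [hid] at this
  simpa using this
end

section
/- Let (X,d) be a metric space, E a complex Banach algebra, and f ∈ Lip_d(X,E) such that P(f) = 0 for some nonzero polynomial P in one variable (where P(f) is computed pointwise in E, interpreting z^k as f(x)^k). Fix x ∈ X and let D be a linear functional on Lip_d(X) which is a point derivation at x, i.e. D(gh) = g(x)D(h) + h(x)D(g) for all g, h ∈ Lip_d(X). Then D(φ∘f) = 0 for every character φ of E. -/
/-! The function `g = φ ∘ f` is Lipschitz and takes values among the finitely many roots of `P`.
Hence the indicator `e` of the level set `{g = g x}` is again bounded Lipschitz (every function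
on a finite metric space is Lipschitz). It is an idempotent with `e x = 1`, so `D e = 0`, and
`g * e = g x • e`; the Leibniz rule at `x` then gives `D g = D (g * e) = D (g x • e) = 0`. -/

open WeakDual

def MemLip {X E : Type*} [MetricSpace X] [NormedRing E] (f : X → E) : Prop :=
  (∃ K : NNReal, LipschitzWith K f) ∧ (∃ C : ℝ, ∀ x : X, ‖f x‖ ≤ C)

open Set

theorem Set.Finite.exists_lipschitzOnWith {α β : Type*} [MetricSpace α] [PseudoMetricSpace β]
    {s : Set α} (hs : s.Finite) (χ : α → β) : ∃ K : NNReal, LipschitzOnWith K χ s := by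
  obtain ⟨K, hK⟩ := ((hs.prod hs).image fun p => dist (χ p.1) (χ p.2) / dist p.1 p.2).bddAbove
  refine ⟨K.toNNReal, LipschitzOnWith.of_dist_le_mul fun a ha b hb => ?_⟩
  rcases eq_or_ne a b with rfl | hab
  · simp
  · have hquot := hK ⟨(a, b), ⟨ha, hb⟩, rfl⟩
    rw [div_le_iff₀ (dist_pos.2 hab)] at hquot
    exact hquot.trans (mul_le_mul_of_nonneg_right (Real.le_coe_toNNReal K) dist_nonneg)

section MemLip

variable {X : Type*} [MetricSpace X]

theorem MemLip.continuousLinearMap_comp {𝕜 E F : Type*} [NontriviallyNormedField 𝕜]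
    [NormedRing E] [NormedSpace 𝕜 E] [NormedRing F] [NormedSpace 𝕜 F] {f : X → E}
    (hf : MemLip f) (L : E →L[𝕜] F) :
    MemLip (L ∘ f) := by
  obtain ⟨⟨K, hK⟩, ⟨C, hC⟩⟩ := hf
  refine ⟨⟨‖L‖₊ * K, L.lipschitz.comp hK⟩, ⟨‖L‖ * C, fun y => ?_⟩⟩
  exact (L.le_opNorm (f y)).trans (mul_le_mul_of_nonneg_left (hC y) (norm_nonneg L))

theorem memLip_comp_of_finite_range {Y F : Type*} [MetricSpace Y] [NormedRing F] {g : X → Y}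
    {K : NNReal} (hg : LipschitzWith K g) (hfin : (range g).Finite) (χ : Y → F) :
    MemLip (χ ∘ g) := by
  obtain ⟨L, hL⟩ := hfin.exists_lipschitzOnWith χ
  refine ⟨⟨L * K, lipschitzOnWith_univ.1 (hL.comp hg.lipschitzOnWith (mapsTo_range g univ))⟩, ?_⟩
  obtain ⟨C, hC⟩ := isBounded_iff_forall_norm_le.1 (hfin.image χ).isBounded
  exact ⟨C, fun y => hC _ ⟨g y, mem_range_self y, rfl⟩⟩

end MemLip

section PointDerivation

variable {X R : Type*} [MetricSpace X] [NormedCommRing R] {x : X} {D : (X → R) → R}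

theorem pointDerivation_apply_eq_zero_of_mul_self_eq
    (hDder : ∀ g h : X → R, MemLip g → MemLip h → D (g * h) = g x * D h + h x * D g)
    {e : X → R} (he : MemLip e) (hee : e * e = e) : D e = 0 := by
  have hleibniz : D e = 2 * e x * D e := by
    have hsq := hDder e e he he
    rw [hee] at hsq
    linear_combination hsq
  have hex : e x * e x = e x := congrFun hee x
  -- `(1 - 2 * e x) ^ 2 = 1` because `e x` is idempotent
  linear_combination (1 - 2 * e x) * hleibniz - 4 * D e * hex

theorem pointDerivation_apply_eq_zero_of_mul_eq_smul_idempotent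
    (hDsmul : ∀ (c : R) (g : X → R), MemLip g → D (c • g) = c * D g)
    (hDder : ∀ g h : X → R, MemLip g → MemLip h → D (g * h) = g x * D h + h x * D g)
    {g e : X → R} (hg : MemLip g) (he : MemLip e) (hee : e * e = e) (hex : e x = 1)
    (hge : g * e = g x • e) : D g = 0 := by
  have hDe : D e = 0 := pointDerivation_apply_eq_zero_of_mul_self_eq hDder he hee
  calc D g = D (g * e) := by rw [hDder g e hg he, hDe, hex]; ring
    _ = 0 := by rw [hge, hDsmul _ e he, hDe, mul_zero]

end PointDerivation

theorem pointDerivation_character_comp_eq_zero_general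
    {X E : Type*} [MetricSpace X] [NormedRing E] [NormedAlgebra ℂ E]
    (f : X → E) (hf : MemLip f)
    (P : Polynomial ℂ) (hP : P ≠ 0) (hPf : ∀ y : X, Polynomial.aeval (f y) P = 0)
    (x : X) (D : (X → ℂ) → ℂ)
    (hDsmul : ∀ (c : ℂ) (g : X → ℂ), MemLip g → D (c • g) = c * D g)
    (hDder : ∀ g h : X → ℂ, MemLip g → MemLip h → D (g * h) = g x * D h + h x * D g)
    (φ : characterSpace ℂ E) :
    D (fun y : X => φ (f y)) = 0 := by
  set g : X → ℂ := fun y => φ (f y)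
  have hg : MemLip g := hf.continuousLinearMap_comp (φ : WeakDual ℂ E)
  have hfin : (range g).Finite := (P.rootSet_finite ℂ).subset <| range_subset_iff.2 fun y =>
    Polynomial.mem_rootSet.2 ⟨hP, by rw [Polynomial.aeval_algHom_apply, hPf y, map_zero]⟩
  set e : X → ℂ := (fun z => if z = g x then 1 else 0) ∘ g
  obtain ⟨K, hK⟩ := hg.1
  have he : MemLip e := memLip_comp_of_finite_range hK hfin _
  have hee : e * e = e := by
    funext y
    by_cases hy : g y = g x <;> simp [e, hy]
  have hge : g * e = g x • e := by
    funext y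
    by_cases hy : g y = g x <;> simp [e, hy]
  exact pointDerivation_apply_eq_zero_of_mul_eq_smul_idempotent hDsmul hDder hg he hee
    (by simp [e]) hge

/-- Let `(X,d)` be a metric space, `E` a complex Banach algebra and
`f ∈ Lip_d(X,E)` such that `P(f) = 0` pointwise in `E` for some nonzero one-variable
polynomial `P`.  Fix `x ∈ X` and let `D` be a linear functional on `Lip_d(X)` (a functional
on functions, additive and homogeneous on bounded Lipschitz functions) which is a point
derivation at `x`, i.e. `D (g*h) = g x * D h + h x * D g` for all `g, h ∈ Lip_d(X)`.
Then `D (φ ∘ f) = 0` for every character `φ` of `E`. -/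
theorem pointDerivation_character_comp_eq_zero
    {X E : Type*} [MetricSpace X] [NormedRing E] [NormedAlgebra ℂ E] [CompleteSpace E]
    (f : X → E) (hf : MemLip f)
    (P : Polynomial ℂ) (hP : P ≠ 0) (hPf : ∀ y : X, Polynomial.aeval (f y) P = 0)
    (x : X) (D : (X → ℂ) → ℂ)
    (hDadd : ∀ g h : X → ℂ, MemLip g → MemLip h → D (g + h) = D g + D h)
    (hDsmul : ∀ (c : ℂ) (g : X → ℂ), MemLip g → D (c • g) = c * D g)
    (hDder : ∀ g h : X → ℂ, MemLip g → MemLip h → D (g * h) = g x * D h + h x * D g)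
    (φ : characterSpace ℂ E) :
    D (fun y : X => φ (f y)) = 0 :=
  pointDerivation_character_comp_eq_zero_general f hf P hP hPf x D hDsmul hDder φ
end

section
/- Let (X,d) be a metric space, A a complex Banach algebra, φ a character of A, x ∈ X, and D : Lip_d(X) → ℂ a bounded linear functional. Then the following are equivalent: (i) D is a point derivation at x, i.e. D(gh) = g(x)D(h) + h(x)D(g) for all g, h ∈ Lip_d(X); (ii) the functional D_φ : Lip_d(X,A) → ℂ defined by D_φ(f) = D(φ∘f) is an (x,φ)-point derivation on Lip_d(X,A), i.e. D_φ(fg) = φ(f(x))·D_φ(g) + φ(g(x))·D_φ(f) for all f, g ∈ Lip_d(X,A). -/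
open WeakDual

private lemma memLip_clm_comp {X A B : Type*} [MetricSpace X] [NormedRing A] [NormedRing B]
    [NormedAlgebra ℂ A] [NormedAlgebra ℂ B]
    (T : A →L[ℂ] B) {f : X → A} (hf : MemLip f) : MemLip (fun y => T (f y)) := by
  obtain ⟨⟨K, hK⟩, ⟨C, hC⟩⟩ := hf
  refine ⟨⟨‖T‖₊ * K, T.lipschitz.comp hK⟩, ⟨‖T‖ * C, fun y => ?_⟩⟩
  calc ‖T (f y)‖ ≤ ‖T‖ * ‖f y‖ := T.le_opNorm _
    _ ≤ ‖T‖ * C := mul_le_mul_of_nonneg_left (hC y) (norm_nonneg _)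

/-- Let `(X,d)` be a metric space, `A` a complex Banach algebra, `φ` a
character of `A`, `x ∈ X`, and `D` a bounded linear functional on `Lip_d(X)` (a functional
on functions which is additive and homogeneous on bounded Lipschitz functions and bounded
with respect to the Lipschitz norm `‖g‖ = ‖g‖_∞ + P_d(g)`).  Then `D` is a point derivation
at `x` if and only if the functional `D_φ : Lip_d(X,A) → ℂ`, `D_φ f = D (φ ∘ f)`, is an
`(x,φ)`-point derivation on `Lip_d(X,A)`, i.e.
`D_φ (f*g) = φ (f x) * D_φ g + φ (g x) * D_φ f` for all `f, g ∈ Lip_d(X,A)`. -/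
theorem pointDerivation_iff_vectorValued_pointDerivation
    {X A : Type*} [MetricSpace X] [NormedRing A] [NormedAlgebra ℂ A] [CompleteSpace A]
    (φ : characterSpace ℂ A) (x : X)
    (D : (X → ℂ) → ℂ)
    (hDadd : ∀ g h : X → ℂ, MemLip g → MemLip h → D (g + h) = D g + D h)
    (hDsmul : ∀ (c : ℂ) (g : X → ℂ), MemLip g → D (c • g) = c * D g)
    (hDbdd : ∃ M : ℝ, ∀ (g : X → ℂ) (K : NNReal) (C : ℝ),
      LipschitzWith K g → (∀ y : X, ‖g y‖ ≤ C) → ‖D g‖ ≤ M * (C + K)) :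
    (∀ g h : X → ℂ, MemLip g → MemLip h → D (g * h) = g x * D h + h x * D g) ↔
      (∀ f g : X → A, MemLip f → MemLip g →
        D (fun y : X => φ (f y * g y)) =
          φ (f x) * D (fun y : X => φ (g y)) + φ (g x) * D (fun y : X => φ (f y))) := by
  have hφ : ∀ {f : X → A}, MemLip f → MemLip (fun y => φ (f y)) :=
    fun hf => memLip_clm_comp ((φ : WeakDual ℂ A) : A →L[ℂ] ℂ) hf
  constructor
  · intro H f g hf hg
    have : (fun y : X => φ (f y * g y)) =
        (fun y : X => φ (f y)) * fun y : X => φ (g y) := by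
      funext y; exact map_mul φ _ _
    rw [this]
    exact H _ _ (hφ hf) (hφ hg)
  · intro H g h hg hh
    set T : ℂ →L[ℂ] A := (ContinuousLinearMap.id ℂ ℂ).smulRight (1 : A) with hT
    have hTval : ∀ c : ℂ, T c = algebraMap ℂ A c := by
      intro c; simp [hT, Algebra.algebraMap_eq_smul_one]
    have key := H (fun y => T (g y)) (fun y => T (h y))
      (memLip_clm_comp T hg) (memLip_clm_comp T hh)
    simp only [hTval, AlgHomClass.commutes] at key
    have e1 : (fun y : X => φ (algebraMap ℂ A (g y) * algebraMap ℂ A (h y))) = g * h := by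
      funext y; simp [map_mul, AlgHomClass.commutes]
    have e2 : (fun y : X => φ (algebraMap ℂ A (g y))) = g := by
      funext y; simp [AlgHomClass.commutes]
    have e3 : (fun y : X => φ (algebraMap ℂ A (h y))) = h := by
      funext y; simp [AlgHomClass.commutes]
    rw [e1] at key
    exact key
end
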